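/- arXiv:2201.08100 — 3 statements merged into one kernel-verified Lean document; each statement's English description precedes it below -/
import Mathlib

section
/- For n ≥ 1 and k ≥ 0, the generating function A(k,n;t) := Σ_q |⊔_{j≤k} I(j,n)_q| t^q, counting by dimension the completely unadmissible sequences of length at most k and excess n, satisfies A(k+1, n; t) = A(k+1, n+1; t) + A(k, 2n+1; t) · t^{n−1}. -/
/-- A list `(i₁, …, i_k)` of positive integers is completely unadmissible of excess `n`
if `i_k ≥ n` and `i_j ≥ 2·i_{j+1} + 1` for all `j < k`. -/
def IsCU (n : ℕ) (l : List ℕ) : Prop :=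
  (∀ x ∈ l, 0 < x) ∧ (∀ h : l ≠ [], n ≤ l.getLast h) ∧
    ∀ m : ℕ, (hm : m + 1 < l.length) →
      2 * l.get ⟨m + 1, hm⟩ + 1 ≤ l.get ⟨m, Nat.lt_of_succ_lt hm⟩

/-- The dimension of `(i₁, …, i_k)` is `Σ_j (i_j − 1)`. -/
def dimCU (l : List ℕ) : ℕ := (l.map (· - 1)).sum

/-- The coefficient of `t^q` in `A(k,n;t)`: the number of completely unadmissible
sequences of excess `n`, length at most `k`, and dimension `q`. -/
noncomputable def cuCount (k n q : ℕ) : ℕ :=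
  Nat.card {l : List ℕ // l.length ≤ k ∧ IsCU n l ∧ dimCU l = q}

/-!
Split the sequences of excess `n` by their last entry `i_k ≥ n`. Those with `i_k > n` are exactly
the sequences of excess `n + 1`. Those with `i_k = n` are `l ++ [n]` with `l` of excess `2n + 1`
and one entry shorter, and appending `n` raises the dimension by `n - 1`; this accounts for the
factor `t^(n-1)`.
-/

namespace IsCU

variable {n : ℕ} {l : List ℕ}

theorem iff_isChain : IsCU n l ↔
    (∀ x ∈ l, 0 < x) ∧ (∀ x ∈ l.getLast?, n ≤ x) ∧
      l.IsChain (fun a b => 2 * b + 1 ≤ a) := by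
  have hlast : (∀ h : l ≠ [], n ≤ l.getLast h) ↔ ∀ x ∈ l.getLast?, n ≤ x := by
    cases l using List.reverseRecOn <;> simp
  rw [IsCU, hlast, List.isChain_iff_getElem]
  simp only [List.get_eq_getElem]

theorem nil : IsCU n [] := by
  simp [iff_isChain]

theorem append_singleton_iff {a : ℕ} :
    IsCU n (l ++ [a]) ↔ 0 < a ∧ n ≤ a ∧ IsCU (2 * a + 1) l := by
  simp only [iff_isChain, List.isChain_append, List.mem_append, List.mem_singleton,
    List.getLast?_append, List.getLast?_singleton, List.head?_cons, Option.mem_def,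
    Option.some_or, Option.some.injEq, List.isChain_singleton, true_and, forall_eq']
  constructor
  · rintro ⟨hpos, hn, hchain, hlast⟩
    exact ⟨hpos a (Or.inr rfl), hn, fun x hx => hpos x (Or.inl hx), hlast, hchain⟩
  · rintro ⟨ha, hn, hpos, hlast, hchain⟩
    exact ⟨fun x hx => hx.elim (hpos x) (· ▸ ha), hn, hchain, hlast⟩

end IsCU

theorem dimCU_append_singleton (l : List ℕ) (a : ℕ) : dimCU (l ++ [a]) = dimCU l + (a - 1) := by
  simp [dimCU]

def cuSet (k n q : ℕ) : Set (List ℕ) := {l | l.length ≤ k ∧ IsCU n l ∧ dimCU l = q}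

theorem cuCount_eq_ncard (k n q : ℕ) : cuCount k n q = (cuSet k n q).ncard := rfl

theorem le_dimCU_add_one {l : List ℕ} {x : ℕ} (hx : x ∈ l) : x ≤ dimCU l + 1 := by
  have : x - 1 ≤ dimCU l :=
    List.single_le_sum (fun _ _ => Nat.zero_le _) _ (List.mem_map_of_mem hx)
  omega

theorem cuSet_finite (k n q : ℕ) : (cuSet k n q).Finite := by
  have hbounded : {l : List ℕ | l.length ≤ k ∧ ∀ x ∈ l, x < q + 2}.Finite := by
    refine ((List.finite_length_le (Fin (q + 2)) k).image (List.map Fin.val)).subset ?_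
    rintro l ⟨hl, hb⟩
    exact ⟨l.pmap (fun x hx => (⟨x, hx⟩ : Fin (q + 2))) hb, by simpa using hl,
      by simp [List.map_pmap]⟩
  refine hbounded.subset fun l ⟨hl, _, hq⟩ => ⟨hl, fun x hx => ?_⟩
  have := le_dimCU_add_one hx
  omega

theorem cuSet_succ_eq_union {n : ℕ} (hn : 1 ≤ n) (k q : ℕ) :
    cuSet (k + 1) n q = cuSet (k + 1) (n + 1) q ∪
      (· ++ [n]) '' {l | l.length ≤ k ∧ IsCU (2 * n + 1) l ∧ dimCU l + (n - 1) = q} := by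
  ext l
  rcases l.eq_nil_or_concat' with rfl | ⟨l, a, rfl⟩
  · simp [cuSet, IsCU.nil]
  · simp only [cuSet, Set.mem_union, Set.mem_image, Set.mem_ofPred_eq, List.length_append,
      List.length_singleton, IsCU.append_singleton_iff, dimCU_append_singleton,
      List.append_singleton_inj]
    constructor
    · rintro ⟨hl, ⟨ha, hna, hcu⟩, hq⟩
      rcases hna.eq_or_lt with rfl | hlt
      · exact Or.inr ⟨l, ⟨by omega, hcu, hq⟩, rfl, rfl⟩
      · exact Or.inl ⟨hl, ⟨ha, hlt, hcu⟩, hq⟩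
    · rintro (⟨hl, ⟨ha, hna, hcu⟩, hq⟩ | ⟨l, ⟨hl, hcu, hq⟩, rfl, rfl⟩)
      · exact ⟨hl, ⟨ha, by omega, hcu⟩, hq⟩
      · exact ⟨by omega, ⟨hn, le_rfl, hcu⟩, hq⟩

theorem disjoint_cuSet_succ_image (n k q : ℕ) :
    Disjoint (cuSet (k + 1) (n + 1) q)
      ((· ++ [n]) '' {l | l.length ≤ k ∧ IsCU (2 * n + 1) l ∧ dimCU l + (n - 1) = q}) := by
  rw [Set.disjoint_right]
  rintro _ ⟨l, -, rfl⟩ ⟨-, h, -⟩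
  have := (IsCU.append_singleton_iff.mp h).2.1
  omega

theorem ncard_dimCU_add_eq (k m d q : ℕ) :
    {l : List ℕ | l.length ≤ k ∧ IsCU m l ∧ dimCU l + d = q}.ncard =
      if d ≤ q then cuCount k m (q - d) else 0 := by
  split_ifs with hd
  · rw [cuCount_eq_ncard, cuSet]
    congr! 5 with l
    omega
  · have hempty : {l : List ℕ | l.length ≤ k ∧ IsCU m l ∧ dimCU l + d = q} = ∅ :=
      Set.eq_empty_of_forall_notMem fun _ ⟨_, _, hq⟩ => hd (by omega)
    rw [hempty, Set.ncard_empty]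

theorem cuCount_succ {n : ℕ} (hn : 1 ≤ n) (k q : ℕ) :
    cuCount (k + 1) n q = cuCount (k + 1) (n + 1) q +
      if n - 1 ≤ q then cuCount k (2 * n + 1) (q - (n - 1)) else 0 := by
  have hfin := cuSet_finite (k + 1) n q
  rw [cuSet_succ_eq_union hn] at hfin
  rw [cuCount_eq_ncard (k + 1) n, cuSet_succ_eq_union hn,
    Set.ncard_union_eq (disjoint_cuSet_succ_image n k q) (hfin.subset Set.subset_union_left)
      (hfin.subset Set.subset_union_right),
    Set.ncard_image_of_injective _ (List.append_left_injective _), ncard_dimCU_add_eq,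
    ← cuCount_eq_ncard]

/-- The Goodwillie-EHP recursion for the generating functions:
`A(k+1, n; t) = A(k+1, n+1; t) + A(k, 2n+1; t) · t^{n−1}`. -/
theorem A_rec (n k : ℕ) (hn : 1 ≤ n) :
    (PowerSeries.mk fun q => (cuCount (k + 1) n q : ℚ)) =
      (PowerSeries.mk fun q => (cuCount (k + 1) (n + 1) q : ℚ)) +
        (PowerSeries.mk fun q => (cuCount k (2 * n + 1) q : ℚ)) *
          (PowerSeries.X : PowerSeries ℚ) ^ (n - 1) := by
  ext q
  rw [map_add, PowerSeries.coeff_mul_X_pow', PowerSeries.coeff_mk, PowerSeries.coeff_mk,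
    cuCount_succ hn]
  split_ifs <;> simp
end

section
/- Let α ∈ (0,1) and define F(q) = √(log(1/α)/(2π)) · ∫_{−∞}^{∞} exp(½ log(α)·x² + q·α^{xi − ½}) dx (where i is the imaginary unit and the integral is real-valued). Then F satisfies the functional-differential equation F′(q) = F(αq) for all real q. -/
open MeasureTheory

/-- Mahler's integrand: `exp(½ log(α)·x² + q·α^{xi − ½})`, where
`α^{xi − ½} = exp((xi − ½)·log α)`. -/
noncomputable def mahlerIntegrand (α q x : ℝ) : ℂ :=
  Complex.exp ((1 / 2 : ℂ) * (Real.log α : ℂ) * (x : ℂ) ^ 2 +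
    (q : ℂ) * Complex.exp (((x : ℂ) * Complex.I - 1 / 2) * (Real.log α : ℂ)))

/-- Mahler's function `F(q) = √(log(1/α)/(2π)) · ∫_{−∞}^{∞} exp(½ log(α)x² + q α^{xi−½}) dx`. -/
noncomputable def mahlerF (α q : ℝ) : ℝ :=
  Real.sqrt (Real.log (1 / α) / (2 * Real.pi)) * (∫ x : ℝ, mahlerIntegrand α q x).re

/-!
Expanding `exp(q α^{xi−½})` in powers of `q`, the `k`-th term of Mahler's integrand is the shifted
Gaussian `exp(½ log(α) x² + k (xi − ½) log α)`, whose integral is `√(2π / log(1/α)) · α^{k(k−1)/2}`.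
The moduli of these terms have summable integrals, so summation and integration commute and
`F(q) = ∑ α^{k(k−1)/2} qᵏ / k!`, a real entire series with bounded coefficients. Differentiating
termwise and using `α^{(k+1)k/2} = αᵏ · α^{k(k−1)/2}` gives `F′(q) = F(αq)`.
-/

open Nat Real
open scoped Complex
open Complex (I)

section

variable {𝕜 : Type*} [RCLike 𝕜]

theorem summable_mul_pow_div_factorial {a : ℕ → 𝕜} {C : ℝ}
    (ha : ∀ k, ‖a k‖ ≤ C) (q : 𝕜) : Summable fun k => a k * q ^ k / k ! := by
  refine .of_norm_bounded ((Real.summable_pow_div_factorial ‖q‖).mul_left C) fun k => ?_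
  rw [norm_div, norm_mul, norm_pow, RCLike.norm_natCast, mul_div_assoc]
  exact mul_le_mul_of_nonneg_right (ha k) (by positivity)

theorem hasDerivAt_tsum_mul_pow_div_factorial {a : ℕ → 𝕜} {C : ℝ}
    (ha : ∀ k, ‖a k‖ ≤ C) (q : 𝕜) :
    HasDerivAt (fun z => ∑' k, a k * z ^ k / k !) (∑' k, a (k + 1) * q ^ k / k !) q := by
  set R := ‖q‖ + 1
  have hq : q ∈ Metric.ball (0 : 𝕜) R := by simp [R]
  have hu : Summable fun k => C * (k * R ^ (k - 1) / k !) := by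
    refine Summable.mul_left C ?_
    rw [← summable_nat_add_iff 1]
    refine (Real.summable_pow_div_factorial R).congr fun k => ?_
    rw [Nat.add_sub_cancel, Nat.factorial_succ, Nat.cast_mul]
    field_simp
  have hbound : ∀ k (y : 𝕜), y ∈ Metric.ball 0 R →
      ‖a k * (k * y ^ (k - 1)) / (k ! : 𝕜)‖ ≤ C * (k * R ^ (k - 1) / k !) := by
    intro k y hy
    rw [mem_ball_zero_iff] at hy
    rw [norm_div, norm_mul, norm_mul, norm_pow, RCLike.norm_natCast, RCLike.norm_natCast,
      mul_div_assoc]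
    gcongr
    · exact (norm_nonneg _).trans (ha k)
    · exact ha k
  have hderiv := hasDerivAt_tsum_of_isPreconnected hu Metric.isOpen_ball
    (convex_ball (0 : 𝕜) R).isPreconnected
    (fun k y _ => ((hasDerivAt_pow k y).const_mul (a k)).div_const (k ! : 𝕜)) hbound hq
    (summable_mul_pow_div_factorial ha q) hq
  refine hderiv.congr_deriv ?_
  rw [(Summable.of_norm_bounded hu fun k => hbound k q hq).tsum_eq_zero_add]
  simp only [CharP.cast_eq_zero, zero_mul, mul_zero, zero_div, zero_add]
  refine tsum_congr fun k => ?_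
  rw [Nat.add_sub_cancel, Nat.factorial_succ]
  push_cast
  field_simp

end

theorem cexp_add_mul_cexp_eq_tsum (A q z : ℂ) :
    cexp (A + q * cexp z) = ∑' k : ℕ, q ^ k / k ! * cexp (A + k * z) := by
  have hexp := (NormedSpace.expSeries_div_hasSum_exp (q * cexp z)).tsum_eq
  rw [← Complex.exp_eq_exp_ℂ] at hexp
  rw [Complex.exp_add, ← hexp, ← tsum_mul_left]
  refine tsum_congr fun k => ?_
  rw [Complex.exp_add, Complex.exp_nat_mul, mul_pow]
  ring

-- With `L = log α`, the coefficient of `qᵗ / t!` in Mahler's integrand.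
noncomputable def mahlerTerm (L t x : ℝ) : ℂ :=
  cexp (1 / 2 * L * x ^ 2 + t * ((x * I - 1 / 2) * L))

theorem mahlerTerm_eq_cexp_quadratic (L t x : ℝ) :
    mahlerTerm L t x = cexp (↑(L / 2) * x ^ 2 + ↑(t * L) * I * x + ↑(-(t * L) / 2)) := by
  rw [mahlerTerm]
  push_cast
  ring_nf

theorem norm_mahlerTerm (L t x : ℝ) :
    ‖mahlerTerm L t x‖ = rexp (-(t * L) / 2) * rexp (L / 2 * x ^ 2) := by
  have hsplit : (1 / 2 * L * x ^ 2 + t * ((x * I - 1 / 2) * L) : ℂ)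
      = ((-(t * L) / 2 + L / 2 * x ^ 2 : ℝ) : ℂ) + ((t * L * x : ℝ) : ℂ) * I := by
    push_cast
    ring
  rw [mahlerTerm, hsplit, Complex.exp_add, norm_mul, Complex.norm_exp_ofReal,
    Complex.norm_exp_ofReal_mul_I, mul_one, Real.exp_add]

section

variable {L : ℝ}

theorem integrable_mahlerTerm (hL : L < 0) (t : ℝ) : Integrable (mahlerTerm L t) := by
  simp_rw [funext (mahlerTerm_eq_cexp_quadratic L t)]
  exact integrable_cexp_quadratic' (by rw [Complex.ofReal_re]; linarith) _ _

theorem integral_mahlerTerm (hL : L < 0) (t : ℝ) :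
    ∫ x, mahlerTerm L t x = ↑(√(2 * π / -L) * rexp (L * (t * (t - 1)) / 2)) := by
  simp_rw [mahlerTerm_eq_cexp_quadratic]
  rw [integral_cexp_quadratic (by rw [Complex.ofReal_re]; linarith)]
  have hsqrt : (π / -↑(L / 2) : ℂ) ^ (1 / 2 : ℂ) = ↑√(2 * π / -L) := by
    rw [Real.sqrt_eq_rpow, Complex.ofReal_cpow (div_nonneg (by positivity) (by linarith))]
    push_cast
    congr 1
    field_simp
  rw [hsqrt]
  push_cast
  congr 2
  field_simp
  rw [Complex.I_sq]
  ring

theorem integral_norm_mahlerTerm (L t : ℝ) :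
    ∫ x, ‖mahlerTerm L t x‖ = √(2 * π / -L) * rexp (-(t * L) / 2) := by
  simp_rw [norm_mahlerTerm]
  rw [integral_const_mul, mul_comm]
  congr 1
  have hgauss := integral_gaussian (-(L / 2))
  simp only [neg_neg] at hgauss
  rw [hgauss]
  congr 1
  field_simp

end

theorem mahlerIntegrand_eq_tsum (α q x : ℝ) :
    mahlerIntegrand α q x = ∑' k : ℕ, (q : ℂ) ^ k / k ! * mahlerTerm (log α) k x := by
  rw [mahlerIntegrand, cexp_add_mul_cexp_eq_tsum]
  simp only [mahlerTerm, Complex.ofReal_natCast]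

theorem integral_mahlerIntegrand {α : ℝ} (hα : α ∈ Set.Ioo 0 1) (q : ℝ) :
    ∫ x, mahlerIntegrand α q x =
      ↑(√(2 * π / -log α) * ∑' k : ℕ, α ^ k.choose 2 * q ^ k / k !) := by
  have hL : log α < 0 := log_neg hα.1 hα.2
  have hInt (k : ℕ) : Integrable fun x => (q : ℂ) ^ k / k ! * mahlerTerm (log α) k x :=
    (integrable_mahlerTerm hL k).const_mul _
  have hSum : Summable fun k : ℕ => ∫ x, ‖(q : ℂ) ^ k / k ! * mahlerTerm (log α) k x‖ := by
    simp_rw [norm_mul, integral_const_mul, integral_norm_mahlerTerm]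
    refine ((Real.summable_pow_div_factorial (|q| * rexp (-log α / 2))).mul_right
      √(2 * π / -log α)).congr fun k => ?_
    rw [mul_pow, ← Real.exp_nat_mul]
    simp only [Complex.norm_div, norm_pow, Complex.norm_real, norm_eq_abs, RCLike.norm_natCast]
    ring_nf
  have hcoef (k : ℕ) : rexp (log α * (k * (k - 1)) / 2) = α ^ k.choose 2 := by
    rw [← Real.rpow_natCast, Real.rpow_def_of_pos hα.1, Nat.cast_choose_two]
    ring_nf
  simp_rw [mahlerIntegrand_eq_tsum]
  rw [← integral_tsum_of_summable_integral_norm hInt hSum]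
  simp_rw [integral_const_mul, integral_mahlerTerm hL, hcoef]
  rw [Complex.ofReal_mul, Complex.ofReal_tsum, ← tsum_mul_left]
  refine tsum_congr fun k => ?_
  push_cast
  ring

theorem mahlerF_eq_tsum {α : ℝ} (hα : α ∈ Set.Ioo 0 1) (q : ℝ) :
    mahlerF α q = ∑' k : ℕ, α ^ k.choose 2 * q ^ k / k ! := by
  have hL : 0 < -log α := neg_pos.mpr (log_neg hα.1 hα.2)
  rw [mahlerF, integral_mahlerIntegrand hα, Complex.ofReal_re, ← mul_assoc, one_div, log_inv,
    ← Real.sqrt_mul (by positivity), div_mul_div_cancel₀ (by positivity), div_self hL.ne',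
    Real.sqrt_one, one_mul]

/-- For `α ∈ (0,1)`, Mahler's integral is real-valued and `F` satisfies `F′(q) = F(αq)`. -/
theorem mahlerF_deriv (α : ℝ) (hα : α ∈ Set.Ioo (0 : ℝ) 1) :
    (∀ q : ℝ, (∫ x : ℝ, mahlerIntegrand α q x).im = 0) ∧
    (∀ q : ℝ, HasDerivAt (mahlerF α) (mahlerF α (α * q)) q) := by
  refine ⟨fun q => by rw [integral_mahlerIntegrand hα, Complex.ofReal_im], fun q => ?_⟩
  have hcoef (k : ℕ) : ‖α ^ k.choose 2‖ ≤ 1 := by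
    rw [norm_pow, norm_eq_abs, abs_of_pos hα.1]
    exact pow_le_one₀ hα.1.le hα.2.le
  rw [funext (mahlerF_eq_tsum hα)]
  refine (hasDerivAt_tsum_mul_pow_div_factorial hcoef q).congr_deriv (tsum_congr fun k => ?_)
  rw [Nat.choose_succ_succ', Nat.choose_one_right, pow_add, mul_pow]
  ring
end

section
/- For n ≥ 1 and k ≥ 0, the number of completely unadmissible sequences of excess n and length at most k in dimension q is non-decreasing in k and in q is dominated by: coefficient of t^q in Σ_{j=0}^k t^{(n+1)(2^j−1)−2j}·∏_{i=1}^j (1−t^{2^i−1})^{−1}; in particular for n ≥ 3 and q ≥ 1 this coefficient is at most Σ_{j=1}^k q^{j−1}/((j−1)!·2^{j(j−1)/2}). -/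
/-- The closed-form bound series
`Σ_{j=0}^k t^{(n+1)(2^j−1)−2j}·∏_{i=1}^j (1−t^{2^i−1})^{−1}`. -/
noncomputable def Abound (k n : ℕ) : PowerSeries ℝ :=
  ∑ j ∈ Finset.range (k + 1),
    (PowerSeries.X : PowerSeries ℝ) ^ ((n + 1) * (2 ^ j - 1) - 2 * j) *
      (∏ i ∈ Finset.Icc 1 j, (1 - (PowerSeries.X : PowerSeries ℝ) ^ (2 ^ i - 1)))⁻¹

open Finset

/-!
A completely unadmissible sequence `(i₁, …, i_j)` is determined by its length and its slacks
`s_m = i_m − 2 i_{m+1} − 1` (`s_j = i_j − n`), and its dimension is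
`(n+1)(2^j − 1) − 2j + Σ_m (2^m − 1) s_m`. So the sequences of length `j` and dimension `q`
inject into the ways of writing `q − (n+1)(2^j − 1) + 2j` as a sum of multiples of the numbers
`2^m − 1`, `1 ≤ m ≤ j`, which the coefficient of `t^q` in the `j`-th summand of `Abound` counts.
As `2^1 − 1 = 1`, these are at most the lattice points of the simplex
`Σ_{m<j-1} (2^{m+2} − 1) r_m ≤ M` in `ℕ^{j−1}`. Slicing along the last coordinate and
telescoping with Bernoulli's inequality, a simplex `Σ w_m r_m ≤ M` in `ℕ^d` has at most
`(M + Σ w)^d / (d! ∏ w)` lattice points; for `n ≥ 3`, `M + Σ w ≤ q` and `∏ w ≥ 2^{j(j−1)/2}`.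
-/

theorem Finset.sum_Icc_one_eq_sum_range {M : Type*} [AddCommMonoid M] (f : ℕ → M) (n : ℕ) :
    ∑ i ∈ Icc 1 n, f i = ∑ i ∈ range n, f (i + 1) := by
  rw [range_eq_Ico, sum_Ico_add' f 0 n 1, zero_add, ← Order.succ_eq_add_one,
    Ico_succ_right_eq_Icc]

namespace PowerSeries

variable {R : Type*} [CommRing R]

theorem one_sub_X_pow_mul_mk_dvd {c : ℕ} (hc : c ≠ 0) :
    (1 - X ^ c : R⟦X⟧) * mk (fun m => if c ∣ m then 1 else 0) = 1 := by
  ext m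
  rw [sub_mul, one_mul, map_sub, coeff_X_pow_mul', coeff_mk, coeff_one]
  by_cases hcm : c ≤ m
  · have hm : m ≠ 0 := by omega
    simp [hcm, hm, Nat.dvd_sub_iff_left hcm dvd_rfl]
  · rcases Nat.eq_zero_or_pos m with rfl | hm
    · simp [hcm]
    · simp [hcm, hm.ne', Nat.not_dvd_of_pos_of_lt hm (not_le.mp hcm)]

variable {K : Type*} [Field K]

theorem coeff_inv_prod_one_sub_X_pow {ι : Type*} [DecidableEq ι] (s : Finset ι) (c : ι → ℕ)
    (hc : ∀ i ∈ s, c i ≠ 0) (m : ℕ) :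
    coeff m (∏ i ∈ s, (1 - X ^ c i : K⟦X⟧))⁻¹ =
      #{f ∈ s.finsuppAntidiag m | ∀ i ∈ s, c i ∣ f i} := by
  have hinv : (∏ i ∈ s, (1 - X ^ c i : K⟦X⟧))⁻¹ =
      ∏ i ∈ s, mk fun m => if c i ∣ m then 1 else 0 := by
    rw [PowerSeries.inv_eq_iff_mul_eq_one, ← prod_mul_distrib]
    · exact prod_eq_one fun i hi => by rw [mul_comm, one_sub_X_pow_mul_mk_dvd (hc i hi)]
    · rw [map_prod, prod_eq_one fun i hi => by simp [zero_pow (hc i hi)]]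
      exact one_ne_zero
  simp_rw [hinv, coeff_prod, coeff_mk, prod_boole, sum_boole]

end PowerSeries

def simplexPoints {d : ℕ} (w : Fin d → ℕ) (m : ℕ) : Finset (Fin d → ℕ) :=
  {r ∈ Fintype.piFinset fun _ => range (m + 1) | ∑ i, w i * r i ≤ m}

section simplexPoints

variable {d : ℕ}

theorem mem_simplexPoints {w : Fin d → ℕ} (hw : ∀ i, 0 < w i) {m : ℕ} {r : Fin d → ℕ} :
    r ∈ simplexPoints w m ↔ ∑ i, w i * r i ≤ m := by
  refine ⟨fun h => (mem_filter.mp h).2, fun h => mem_filter.mpr ⟨?_, h⟩⟩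
  refine Fintype.mem_piFinset.mpr fun i => mem_range.mpr ?_
  have := (single_le_sum (fun j _ => Nat.zero_le (w j * r j)) (mem_univ i)).trans h
  nlinarith [hw i]

theorem card_simplexPoints_succ_le {w : Fin (d + 1) → ℕ} (hw : ∀ i, 0 < w i) (m : ℕ) :
    #(simplexPoints w m) ≤ ∑ t ∈ range (m / w (Fin.last d) + 1),
      #(simplexPoints (Fin.init w) (m - w (Fin.last d) * t)) := by
  have hw' : ∀ i, 0 < Fin.init w i := fun i => hw _
  rw [← card_sigma]
  refine card_le_card_of_injOn (fun r => ⟨r (Fin.last d), Fin.init r⟩) (fun r hr => ?_) ?_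
  · rw [mem_coe, mem_simplexPoints hw, Fin.sum_univ_castSucc] at hr
    have hlast : w (Fin.last d) * r (Fin.last d) ≤ m := by omega
    simp only [coe_sigma, Set.mem_sigma_iff, mem_coe, mem_range, mem_simplexPoints hw']
    refine ⟨Nat.lt_succ_of_le ((Nat.le_div_iff_mul_le (hw _)).mpr ?_), ?_⟩
    · linarith
    · simp only [Fin.init]
      omega
  · intro r _ r' _ h
    simp only [Sigma.mk.injEq] at h
    rw [← Fin.snoc_init_self r, ← Fin.snoc_init_self r', h.1, eq_of_heq h.2]

theorem sum_sub_mul_pow_mul_le {a w : ℝ} (hw : 0 ≤ w) {T : ℕ} (h : w * T ≤ a) (d : ℕ) :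
    (∑ t ∈ range (T + 1), (a - w * t) ^ d) * ((d + 1) * w) ≤ (a + w) ^ (d + 1) := by
  set u : ℕ → ℝ := fun t => (a + w - w * t) ^ (d + 1)
  have hstep : ∀ t ∈ range (T + 1), (a - w * t) ^ d * ((d + 1) * w) ≤ u t - u (t + 1) := by
    intro t ht
    have ht : (t : ℝ) ≤ T := by exact_mod_cast Nat.lt_succ_iff.mp (mem_range.mp ht)
    have hpos : 0 ≤ a - w * t := by nlinarith
    have := pow_add_mul_le_add_pow (b := w) hpos (by linarith) (d + 1)
    simp only [u, Nat.cast_add, Nat.cast_one, add_tsub_cancel_right] at this ⊢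
    rw [show a + w - w * (t + 1) = a - w * t by ring, show a + w - w * t = a - w * t + w by ring]
    linarith
  have hlast : 0 ≤ u (T + 1) := by
    simp only [u, Nat.cast_add, Nat.cast_one]
    exact pow_nonneg (by linarith) _
  calc (∑ t ∈ range (T + 1), (a - w * t) ^ d) * ((d + 1) * w)
      ≤ ∑ t ∈ range (T + 1), (u t - u (t + 1)) := by rw [sum_mul]; exact sum_le_sum hstep
    _ = u 0 - u (T + 1) := sum_range_sub' u (T + 1)
    _ ≤ (a + w) ^ (d + 1) := by simp only [u, CharP.cast_eq_zero, mul_zero, sub_zero]; linarith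

theorem card_simplexPoints_mul_le (w : Fin d → ℕ) (hw : ∀ i, 0 < w i) (m : ℕ) :
    (#(simplexPoints w m) : ℝ) * (d.factorial * ∏ i, (w i : ℝ)) ≤ (m + ∑ i, (w i : ℝ)) ^ d := by
  induction d generalizing m with
  | zero =>
    have : #(simplexPoints w m) ≤ 1 := card_le_one.mpr fun a _ b _ => Subsingleton.elim a b
    simpa using (Nat.cast_le (α := ℝ)).mpr this
  | succ d ih =>
    set v := w (Fin.last d)
    set C := ∑ i : Fin d, (w i.castSucc : ℝ)
    set P := ∏ i : Fin d, (w i.castSucc : ℝ)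
    have hv : (0 : ℝ) < v := by exact_mod_cast hw _
    have hrec (t : ℕ) (ht : t ∈ range (m / v + 1)) :
        (#(simplexPoints (Fin.init w) (m - v * t)) : ℝ) * (d.factorial * P)
          ≤ ((m : ℝ) + C - v * t) ^ d := by
      have htv : v * t ≤ m := by
        rw [mul_comm]
        exact (Nat.le_div_iff_mul_le (hw _)).mp (Nat.lt_succ_iff.mp (mem_range.mp ht))
      refine (ih (Fin.init w) (fun i => hw _) (m - v * t)).trans_eq ?_
      push_cast [htv, Fin.init]
      ring
    have hT : (v : ℝ) * (m / v : ℕ) ≤ m + C := by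
      have : ((m / v * v : ℕ) : ℝ) ≤ m := by exact_mod_cast Nat.div_mul_le_self m v
      have : 0 ≤ C := by positivity
      push_cast at *
      linarith
    calc (#(simplexPoints w m) : ℝ) * ((d + 1).factorial * ∏ i, (w i : ℝ))
        = #(simplexPoints w m) * (d.factorial * P) * ((d + 1) * v) := by
          rw [Fin.prod_univ_castSucc, Nat.factorial_succ]; push_cast; ring
      _ ≤ (∑ t ∈ range (m / v + 1), (#(simplexPoints (Fin.init w) (m - v * t)) : ℝ)) *
            (d.factorial * P) * ((d + 1) * v) := by
          gcongr; exact_mod_cast card_simplexPoints_succ_le hw m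
      _ ≤ (∑ t ∈ range (m / v + 1), ((m : ℝ) + C - v * t) ^ d) * ((d + 1) * v) := by
          rw [sum_mul]; gcongr with t ht; exact hrec t ht
      _ ≤ (m + C + v) ^ (d + 1) := sum_sub_mul_pow_mul_le hv.le hT d
      _ = (m + ∑ i, (w i : ℝ)) ^ (d + 1) := by rw [Fin.sum_univ_castSucc, add_assoc]

end simplexPoints

section IsCU

variable {n i j : ℕ} {t u l l' : List ℕ}

theorem isCU_singleton : IsCU n [i] ↔ 0 < i ∧ n ≤ i := by
  simp [IsCU]

theorem isCU_cons_cons : IsCU n (i :: j :: t) ↔ 2 * j + 1 ≤ i ∧ IsCU n (j :: t) := by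
  simp only [IsCU, List.forall_mem_cons, List.length_cons, List.get_eq_getElem, ne_eq,
    reduceCtorEq, not_false_eq_true, List.getLast_cons, forall_const]
  constructor
  · rintro ⟨⟨hi, hj, ht⟩, hlast, hadj⟩
    exact ⟨by simpa using hadj 0 (by omega), ⟨hj, ht⟩, fun _ => hlast,
      fun m hm => by simpa using hadj (m + 1) (by omega)⟩
  · rintro ⟨hij, ⟨hj, ht⟩, hlast, hadj⟩
    refine ⟨⟨by omega, hj, ht⟩, hlast trivial, fun m hm => ?_⟩
    cases m with
    | zero => simpa using hij
    | succ m => simpa using hadj m (by omega)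

theorem IsCU.of_cons (h : IsCU n (i :: u)) : IsCU n u := by
  cases u with
  | nil => simp [IsCU]
  | cons j t => exact (isCU_cons_cons.mp h).2

theorem finite_setOf_length_le_dimCU_eq (k q : ℕ) :
    {l : List ℕ | l.length ≤ k ∧ dimCU l = q}.Finite := by
  refine ((List.finite_length_le (Fin (q + 2)) k).image (List.map Fin.val)).subset ?_
  rintro l ⟨hk, hq⟩
  have hl : ∀ x ∈ l, x < q + 2 := fun x hx => by
    have := List.le_sum_of_mem (List.mem_map_of_mem (f := (· - 1)) hx)
    rw [dimCU] at hq
    omega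
  lift l to List (Fin (q + 2)) using hl
  exact ⟨l, by simpa using hk, rfl⟩

theorem cuCount_mono (n q : ℕ) : Monotone fun k => cuCount k n q := fun _ _ hk =>
  Nat.card_mono ((finite_setOf_length_le_dimCU_eq _ q).subset fun _ h => ⟨h.1, h.2.2⟩)
    fun _ h => ⟨h.1.trans hk, h.2⟩

/-- `cuSlack n l m` is `i_{m+1} − (2 i_{m+2} + 1)` for `l = (i₁, …, i_j)`, and `i_j − n` at the
last position `m = j − 1`; it vanishes for `m ≥ j`. -/
def cuSlack (n : ℕ) (l : List ℕ) (m : ℕ) : ℕ :=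
  l.getD m 0 - if m + 1 < l.length then 2 * l.getD (m + 1) 0 + 1 else n

@[simp]
theorem cuSlack_cons_succ (m : ℕ) : cuSlack n (i :: u) (m + 1) = cuSlack n u m := by
  simp [cuSlack]

theorem cuSlack_eq_zero {m : ℕ} (hm : l.length ≤ m) : cuSlack n l m = 0 := by
  simp [cuSlack, hm]

theorem IsCU.add_one_eq (h : IsCU n (i :: u)) :
    i + 1 = 2 ^ u.length * (n + 1) + ∑ m ∈ range (u.length + 1), 2 ^ m * cuSlack n (i :: u) m := by
  induction u generalizing i with
  | nil =>
    have := (isCU_singleton.mp h).2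
    simp [cuSlack]
    omega
  | cons j t ih =>
    obtain ⟨hij, hj⟩ := isCU_cons_cons.mp h
    have hs : cuSlack n (i :: j :: t) 0 = i - (2 * j + 1) := by simp [cuSlack]
    have hsum : ∑ m ∈ range (t.length + 1), 2 ^ (m + 1) * cuSlack n (i :: j :: t) (m + 1) =
        2 * ∑ m ∈ range (t.length + 1), 2 ^ m * cuSlack n (j :: t) m := by
      rw [mul_sum]
      exact sum_congr rfl fun m _ => by rw [cuSlack_cons_succ, pow_succ]; ring
    have := ih hj
    have := Nat.sub_add_cancel hij
    rw [List.length_cons, sum_range_succ', hs, hsum, pow_succ]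
    linarith

theorem IsCU.dimCU_add (h : IsCU n l) :
    dimCU l + 2 * l.length + (n + 1) =
      2 ^ l.length * (n + 1) + ∑ m ∈ range l.length, (2 ^ (m + 1) - 1) * cuSlack n l m := by
  induction l with
  | nil => simp [dimCU]
  | cons i u ih =>
    have hi : 0 < i := h.1 i (by simp)
    have hdim : dimCU (i :: u) = i - 1 + dimCU u := by simp [dimCU]
    have hw (m : ℕ) : 2 ^ (m + 1 + 1) - 1 = 2 ^ (m + 1) + (2 ^ (m + 1) - 1) := by
      have := Nat.one_le_two_pow (n := m + 1)
      rw [pow_succ]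
      omega
    have := h.add_one_eq
    rw [sum_range_succ'] at this
    rw [hdim, List.length_cons, sum_range_succ', pow_succ]
    simp only [cuSlack_cons_succ, hw, add_mul, sum_add_distrib, zero_add, pow_one, Nat.reduceSub,
      one_mul] at this ⊢
    have := ih h.of_cons
    have : i - 1 + 1 = i := by omega
    linarith

theorem IsCU.eq_of_cuSlack_eq (h : IsCU n l) (h' : IsCU n l')
    (hlen : l.length = l'.length) (hs : cuSlack n l = cuSlack n l') : l = l' := by
  induction l generalizing l' with
  | nil => exact (List.length_eq_zero_iff.mp hlen.symm).symm
  | cons i u ih =>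
    obtain ⟨i', u', rfl⟩ := List.exists_cons_of_length_eq_add_one hlen.symm
    have hu : u = u' := ih h.of_cons h'.of_cons (by simpa using hlen)
      (funext fun m => by simpa using congrFun hs (m + 1))
    subst hu
    have := h.add_one_eq
    rw [hs, ← h'.add_one_eq] at this
    rw [Nat.add_right_cancel this]

def cuExponent (n j : ℕ) : ℕ := (n + 1) * (2 ^ j - 1) - 2 * j

theorem IsCU.dimCU_eq (hn : 1 ≤ n) (h : IsCU n l) :
    dimCU l = cuExponent n l.length +
      ∑ m ∈ range l.length, (2 ^ (m + 1) - 1) * cuSlack n l m := by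
  have hdim := h.dimCU_add
  have hlen : 2 * l.length ≤ (n + 1) * (2 ^ l.length - 1) :=
    calc 2 * l.length ≤ 2 * (2 ^ l.length - 1) := by have := l.length.lt_two_pow_self; omega
      _ ≤ (n + 1) * (2 ^ l.length - 1) := Nat.mul_le_mul_right _ (by omega)
  have hpow : (n + 1) * (2 ^ l.length - 1) + (n + 1) = 2 ^ l.length * (n + 1) := by
    rw [mul_comm, Nat.sub_one_mul, Nat.sub_add_cancel (Nat.le_mul_of_pos_left _ (by positivity))]
  unfold cuExponent
  omega

noncomputable def cuCode (n : ℕ) (l : List ℕ) : ℕ →₀ ℕ :=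
  Finsupp.onFinset (Icc 1 l.length) (fun i => (2 ^ i - 1) * cuSlack n l (i - 1)) fun i hi => by
    rw [mem_Icc]
    by_contra hi'
    rcases Nat.eq_zero_or_pos i with rfl | hpos
    · simp at hi
    · exact hi (by rw [cuSlack_eq_zero (by omega), mul_zero])

theorem cuCode_apply (i : ℕ) : cuCode n l i = (2 ^ i - 1) * cuSlack n l (i - 1) :=
  rfl

/-- `f i` is the sum of the parts equal to `2^i − 1` in a partition of `m`. -/
def mersennePartitions (j m : ℕ) : Finset (ℕ →₀ ℕ) :=
  {f ∈ (Icc 1 j).finsuppAntidiag m | ∀ i ∈ Icc 1 j, 2 ^ i - 1 ∣ f i}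

theorem IsCU.cuCode_mem (hn : 1 ≤ n) (h : IsCU n l) :
    cuCode n l ∈ mersennePartitions l.length (dimCU l - cuExponent n l.length) := by
  refine mem_filter.mpr ⟨mem_finsuppAntidiag.mpr ⟨?_, Finsupp.support_onFinset_subset⟩,
    fun i _ => Dvd.intro _ (cuCode_apply i).symm⟩
  rw [sum_Icc_one_eq_sum_range, h.dimCU_eq hn]
  simp [cuCode_apply]

theorem IsCU.eq_of_cuCode_eq (h : IsCU n l) (h' : IsCU n l')
    (hlen : l.length = l'.length) (hc : cuCode n l = cuCode n l') : l = l' := by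
  refine h.eq_of_cuSlack_eq h' hlen (funext fun m => ?_)
  have hw : 0 < 2 ^ (m + 1) - 1 := Nat.sub_pos_of_lt (Nat.one_lt_two_pow m.succ_ne_zero)
  exact Nat.eq_of_mul_eq_mul_left hw (by simpa [cuCode_apply] using DFunLike.congr_fun hc (m + 1))

end IsCU

theorem cuCount_le_sum {n : ℕ} (hn : 1 ≤ n) (k q : ℕ) :
    cuCount k n q ≤ ∑ j ∈ range (k + 1),
      if cuExponent n j ≤ q then #(mersennePartitions j (q - cuExponent n j)) else 0 := by
  let codes := (range (k + 1)).sigma fun j =>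
    if cuExponent n j ≤ q then mersennePartitions j (q - cuExponent n j) else ∅
  have hcodes : #codes = ∑ j ∈ range (k + 1),
      if cuExponent n j ≤ q then #(mersennePartitions j (q - cuExponent n j)) else 0 := by
    simp only [codes, card_sigma, apply_ite card, card_empty]
  let encode (l : {l : List ℕ // l.length ≤ k ∧ IsCU n l ∧ dimCU l = q}) : codes :=
    ⟨⟨l.1.length, cuCode n l.1⟩, by
      obtain ⟨l, hk, h, rfl⟩ := l
      have hexp : cuExponent n l.length ≤ dimCU l := by rw [h.dimCU_eq hn]; omega
      simpa [codes, Nat.lt_succ_iff, hk, hexp] using h.cuCode_mem hn⟩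
  have hinj : Function.Injective encode := by
    intro l l' he
    simp only [encode, Subtype.mk.injEq, Sigma.mk.injEq] at he
    exact Subtype.ext (l.2.2.1.eq_of_cuCode_eq l'.2.2.1 he.1 (eq_of_heq he.2))
  rw [← hcodes, ← Nat.card_eq_finsetCard]
  exact Nat.card_le_card_of_injective encode hinj

theorem card_mersennePartitions_succ_le (d m : ℕ) :
    #(mersennePartitions (d + 1) m) ≤
      #(simplexPoints (fun i : Fin d => 2 ^ (i.1 + 2) - 1) m) := by
  have hw (i : ℕ) : 0 < 2 ^ i.succ - 1 := Nat.sub_pos_of_lt (Nat.one_lt_two_pow i.succ_ne_zero)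
  have hmem {f : ℕ →₀ ℕ} (hf : f ∈ mersennePartitions (d + 1) m) :
      ∑ i ∈ range d, f (i + 2) + f 1 = m ∧ (∀ i ∉ Icc 1 (d + 1), f i = 0) ∧
        ∀ i, 2 ≤ i → i ≤ d + 1 → 2 ^ i - 1 ∣ f i := by
    obtain ⟨hf, hdvd⟩ := mem_filter.mp hf
    obtain ⟨hsum, hsupp⟩ := mem_finsuppAntidiag.mp hf
    refine ⟨?_, fun i hi => Finsupp.notMem_support_iff.mp fun h => ?_,
      fun i h2 hi => hdvd i (mem_Icc.mpr ⟨by omega, hi⟩)⟩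
    · rwa [sum_Icc_one_eq_sum_range, sum_range_succ'] at hsum
    · exact hi (hsupp h)
  refine card_le_card_of_injOn (fun f i => f (i + 2) / (2 ^ (i.1 + 2) - 1)) (fun f hf => ?_)
    (fun f hf g hg hfg => ?_)
  · obtain ⟨hsum, -, hdvd⟩ := hmem hf
    rw [mem_coe, mem_simplexPoints fun i => hw _, Fin.sum_univ_eq_sum_range
      (fun i => (2 ^ (i + 2) - 1) * (f (i + 2) / (2 ^ (i + 2) - 1))) d]
    rw [sum_congr rfl fun i hi => Nat.mul_div_cancel' (hdvd (i + 2) (by omega)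
      (by have := mem_range.mp hi; omega))]
    omega
  · obtain ⟨hfsum, hf0, hfdvd⟩ := hmem hf
    obtain ⟨hgsum, hg0, hgdvd⟩ := hmem hg
    have htail : ∀ i, 2 ≤ i → f i = g i := by
      intro i hi
      by_cases hid : i ≤ d + 1
      · have := congrFun hfg ⟨i - 2, by omega⟩
        simp only [Nat.sub_add_cancel hi] at this
        exact (Nat.div_left_inj (hfdvd i hi hid) (hgdvd i hi hid)).mp this
      · rw [hf0 i (by simp [hid]), hg0 i (by simp [hid])]
    ext i
    rcases Nat.lt_or_ge i 2 with hi | hi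
    · interval_cases i
      · rw [hf0 0 (by simp), hg0 0 (by simp)]
      · rw [sum_congr rfl fun i _ => htail (i + 2) (by omega)] at hfsum
        omega
    · exact htail i hi

theorem coeff_Abound (k n q : ℕ) :
    PowerSeries.coeff q (Abound k n) = ∑ j ∈ range (k + 1),
      if cuExponent n j ≤ q then (#(mersennePartitions j (q - cuExponent n j)) : ℝ) else 0 := by
  simp only [Abound, map_sum, PowerSeries.coeff_X_pow_mul']
  refine sum_congr rfl fun j _ => ?_
  rw [PowerSeries.coeff_inv_prod_one_sub_X_pow _ _ fun i hi => ?_]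
  · rfl
  · exact Nat.sub_ne_zero_of_lt (Nat.one_lt_two_pow (by grind))

theorem sum_two_pow_sub_one_le_cuExponent {n : ℕ} (hn : 3 ≤ n) (d : ℕ) :
    ∑ i ∈ range d, (2 ^ (i + 2) - 1) ≤ cuExponent n (d + 1) := by
  have hgeom : ∑ i ∈ range d, (2 ^ (i + 2) - 1) + d + 4 = 2 ^ (d + 2) := by
    induction d with
    | zero => rfl
    | succ d ih =>
      have := Nat.one_le_two_pow (n := d + 2)
      rw [sum_range_succ, pow_succ 2 (d + 2)]
      omega
  have hexp : 4 * (2 ^ (d + 1) - 1) ≤ (n + 1) * (2 ^ (d + 1) - 1) :=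
    Nat.mul_le_mul_right _ (by omega)
  have := (d + 1).lt_two_pow_self
  unfold cuExponent
  rw [pow_succ 2 (d + 1)] at hgeom
  omega

theorem two_pow_le_prod_two_pow_sub_one (d : ℕ) :
    2 ^ ((d + 1) * d / 2) ≤ ∏ i ∈ range d, (2 ^ (i + 2) - 1) :=
  calc 2 ^ ((d + 1) * d / 2) = ∏ i ∈ range d, 2 ^ (i + 1) := by
        have := sum_range_id (d + 1)
        rw [sum_range_succ', add_zero, Nat.add_sub_cancel] at this
        rw [prod_pow_eq_pow_sum, this]
    _ ≤ ∏ i ∈ range d, (2 ^ (i + 2) - 1) := prod_le_prod' fun i _ => by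
        have := Nat.one_le_two_pow (n := i + 1)
        rw [pow_succ 2 (i + 1)]
        omega

theorem card_mersennePartitions_le {n : ℕ} (hn : 3 ≤ n) {j q : ℕ} (hj : 1 ≤ j)
    (hq : cuExponent n j ≤ q) : (#(mersennePartitions j (q - cuExponent n j)) : ℝ) ≤
      (q : ℝ) ^ (j - 1) / ((j - 1).factorial * 2 ^ (j * (j - 1) / 2)) := by
  obtain ⟨d, rfl⟩ : ∃ d, j = d + 1 := ⟨j - 1, by omega⟩
  rw [Nat.add_sub_cancel]
  set m := q - cuExponent n (d + 1)
  set w : Fin d → ℕ := fun i => 2 ^ (i.1 + 2) - 1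
  have hw : ∀ i, 0 < w i := fun i => Nat.sub_pos_of_lt (Nat.one_lt_two_pow (by omega))
  have hsum : (m : ℝ) + ∑ i, (w i : ℝ) ≤ q := by
    have : ∑ i, w i ≤ cuExponent n (d + 1) :=
      (Fin.sum_univ_eq_sum_range (fun i => 2 ^ (i + 2) - 1) d).trans_le
        (sum_two_pow_sub_one_le_cuExponent hn d)
    exact_mod_cast (by omega : m + ∑ i, w i ≤ q)
  have hprod : (2 : ℝ) ^ ((d + 1) * d / 2) ≤ ∏ i, (w i : ℝ) := by
    exact_mod_cast (two_pow_le_prod_two_pow_sub_one d).trans_eq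
      (Fin.prod_univ_eq_prod_range (fun i => 2 ^ (i + 2) - 1) d).symm
  rw [le_div_iff₀ (by positivity)]
  calc (#(mersennePartitions (d + 1) m) : ℝ) * (d.factorial * 2 ^ ((d + 1) * d / 2))
      ≤ #(simplexPoints w m) * (d.factorial * ∏ i, (w i : ℝ)) := by
        gcongr
        exact_mod_cast card_mersennePartitions_succ_le d m
    _ ≤ (m + ∑ i, (w i : ℝ)) ^ d := card_simplexPoints_mul_le w hw m
    _ ≤ q ^ d := by gcongr

/-- The count of completely unadmissible sequences of excess `n` and length at most `k`
in dimension `q` is non-decreasing in `k`, is dominated by the coefficient of `t^q` in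
the closed form `Σ_{j=0}^k t^{(n+1)(2^j−1)−2j}·∏_{i=1}^j (1−t^{2^i−1})^{−1}`, and for
`n ≥ 3`, `q ≥ 1` this coefficient is at most `Σ_{j=1}^k q^{j−1}/((j−1)!·2^{j(j−1)/2})`. -/
theorem cuCount_bounds (n k q : ℕ) (hn : 1 ≤ n) :
    (Monotone fun k => cuCount k n q) ∧
    ((cuCount k n q : ℝ) ≤ PowerSeries.coeff q (Abound k n)) ∧
    (3 ≤ n → 1 ≤ q → PowerSeries.coeff q (Abound k n) ≤
      ∑ j ∈ Finset.Icc 1 k,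
        (q : ℝ) ^ (j - 1) / ((Nat.factorial (j - 1) : ℝ) * 2 ^ (j * (j - 1) / 2))) := by
  refine ⟨cuCount_mono n q, ?_, fun hn3 hq => ?_⟩
  · rw [coeff_Abound]
    exact_mod_cast cuCount_le_sum hn k q
  · have hzero : (if cuExponent n 0 ≤ q then
        (#(mersennePartitions 0 (q - cuExponent n 0)) : ℝ) else 0) = 0 := by
      simp [cuExponent, mersennePartitions, Nat.one_le_iff_ne_zero.mp hq]
    rw [coeff_Abound, sum_range_succ', sum_Icc_one_eq_sum_range, hzero, add_zero]
    refine sum_le_sum fun j _ => ?_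
    split_ifs with hj
    · exact card_mersennePartitions_le hn3 j.succ_pos hj
    · positivity
end
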